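/- arXiv:0802.1815 — 5 statements merged into one kernel-verified Lean document; each statement's English description precedes it below -/
import Mathlib

section
/- Let q ≥ 3 be an integer, let p be a prime with p ≥ q, and let r be a power of p. Then for any positive integer d₀ with 1 ≤ d₀ ≤ r − 2 and any composition [ω₀, ω₁, …, ω_{q−1}] of r, there exists a q-ary constant-composition code C of length r with composition [ω₀, ω₁, …, ω_{q−1}] whose minimum distance is at least μ_p(d₀) + 2 and whose size M satisfies M · r^{d₀−1} ≥ r!/(ω₀!·ω₁!⋯ω_{q−1}!). -/
/-!
Label the positions by the elements of `K = 𝔽_r` and the symbols by `0, …, q - 1 ∈ 𝔽_p ⊆ K`.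
The power-sum syndrome `(∑_y c(y) y^j)_{1 ≤ j < d₀}` of a word takes at most `r^(d₀-1)` values,
so some syndrome class `C` of the words of composition `ω` is large enough. For `u ≠ v` in `C`
the difference `g = u - v` has vanishing moments `∑_y g(y) y^j` for `j < d₀` (for `j = 0` because
of the common composition), and also for `j = d₀` when `p ∣ d₀`: `g` takes values in `𝔽_p`, so
this moment is the `p`-th power of the moment of order `d₀ / p`. A nonzero `g` whose moments of
order `≤ D` vanish has at least `D + 2` nonzero values, as otherwise it is orthogonal to the
polynomial of degree `≤ D` vanishing at all but one point of its support.
-/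

open Finset Polynomial

section Moments

variable {R α : Type*} [CommRing R] [Fintype α] {g x : α → R}

theorem sum_mul_eval_eq_zero_of_moments {D : ℕ} (hmom : ∀ j ≤ D, ∑ i, g i * x i ^ j = 0)
    {Q : R[X]} (hQ : Q.natDegree ≤ D) : ∑ i, g i * Q.eval (x i) = 0 := by
  simp_rw [eval_eq_sum_range' (Nat.lt_succ_of_le hQ), Finset.mul_sum]
  rw [Finset.sum_comm]
  refine Finset.sum_eq_zero fun j hj => ?_
  simp_rw [mul_left_comm (g _), ← Finset.mul_sum]
  rw [hmom j (Nat.lt_succ_iff.mp (mem_range.mp hj)), mul_zero]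

theorem add_two_le_card_support_of_moments [IsDomain R] [DecidableEq R] [DecidableEq α]
    (hx : x.Injective) {D : ℕ} (hmom : ∀ j ≤ D, ∑ i, g i * x i ^ j = 0) (hg : g ≠ 0) :
    D + 2 ≤ #{i | g i ≠ 0} := by
  by_contra! hcard
  obtain ⟨z, hz⟩ := Function.ne_iff.mp hg
  set T : Finset α := {i | g i ≠ 0}
  have hzT : z ∈ T := by simpa [T] using hz
  set Q : R[X] := ∏ t ∈ T.erase z, (X - C (x t))
  have hQ : Q.natDegree ≤ D := by
    rw [natDegree_finsetProd_X_sub_C_eq_card, card_erase_of_mem hzT]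
    omega
  have hQz : Q.eval (x z) ≠ 0 := by
    rw [eval_prod]
    exact prod_ne_zero_iff.mpr fun t ht => by
      simpa [sub_eq_zero] using hx.ne (ne_of_mem_erase ht).symm
  have hsum : ∑ i, g i * Q.eval (x i) = g z * Q.eval (x z) := by
    refine Finset.sum_eq_single z (fun i _ hiz => ?_) (by simp)
    by_cases hi : g i = 0
    · rw [hi, zero_mul]
    · rw [eval_prod, prod_eq_zero (i := i) (by simpa [T, hiz] using hi) (by simp), mul_zero]
  exact mul_ne_zero hz hQz (hsum ▸ sum_mul_eval_eq_zero_of_moments hmom hQ)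

variable (p : ℕ) [Fact p.Prime] [CharP R p]

theorem sum_mul_pow_mul_eq_zero (hg : ∀ i, g i ^ p = g i) {m : ℕ}
    (h : ∑ i, g i * x i ^ m = 0) : ∑ i, g i * x i ^ (p * m) = 0 := by
  have hp := (Fact.out : p.Prime).ne_zero
  calc ∑ i, g i * x i ^ (p * m) = (∑ i, g i * x i ^ m) ^ p := by
        simp_rw [sum_pow_char, mul_pow, hg, ← pow_mul, mul_comm m]
    _ = 0 := by rw [h, zero_pow hp]

theorem sum_mul_pow_eq_zero_of_le_mu (hg : ∀ i, g i ^ p = g i) {d : ℕ}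
    (hmom : ∀ j ≤ d - 1, ∑ i, g i * x i ^ j = 0) :
    ∀ j ≤ (if p ∣ d then d else d - 1), ∑ i, g i * x i ^ j = 0 := by
  intro j hj
  split_ifs at hj with hpd
  · obtain hjd | rfl := Nat.lt_or_eq_of_le hj
    · exact hmom j (by omega)
    · obtain ⟨m, rfl⟩ := hpd
      have hp := (Fact.out : p.Prime).two_le
      exact sum_mul_pow_mul_eq_zero p hg (hmom m (by
        have := Nat.mul_le_mul_right m hp
        omega))
  · exact hmom j hj

end Moments

theorem add_two_le_hammingDist {R α : Type*} [CommRing R] [IsDomain R] [DecidableEq R]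
    [Fintype α] [DecidableEq α] (p : ℕ) [Fact p.Prime] [CharP R p] {x u v : α → R}
    (hx : x.Injective) (hu : ∀ i, u i ^ p = u i) (hv : ∀ i, v i ^ p = v i) {d : ℕ}
    (hmom : ∀ j ≤ d - 1, ∑ i, u i * x i ^ j = ∑ i, v i * x i ^ j) (huv : u ≠ v) :
    (if p ∣ d then d else d - 1) + 2 ≤ hammingDist u v := by
  have hg : ∀ i, (u - v) i ^ p = (u - v) i := fun i => by
    rw [Pi.sub_apply, sub_pow_char, hu, hv]
  have hmom' : ∀ j ≤ d - 1, ∑ i, (u - v) i * x i ^ j = 0 := fun j hj => by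
    simp_rw [Pi.sub_apply, sub_mul, sum_sub_distrib, hmom j hj, sub_self]
  calc _ ≤ #{i | (u - v) i ≠ 0} := add_two_le_card_support_of_moments hx
          (sum_mul_pow_eq_zero_of_le_mu p hg hmom') (sub_ne_zero.mpr huv)
    _ = hammingDist u v := by simp [hammingDist, sub_eq_zero]

section Words

variable {α ι : Type*} [Fintype α] [DecidableEq ι]

theorem exists_perm_comp_eq_iff {c w : α → ι} :
    (∃ σ : Equiv.Perm α, w ∘ σ = c) ↔ ∀ i, #{a | c a = i} = #{a | w a = i} := by
  constructor
  · rintro ⟨σ, rfl⟩ i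
    simp_rw [← Fintype.card_subtype]
    exact Fintype.card_congr (σ.subtypeEquiv fun _ => Iff.rfl)
  · intro h
    have e : ∀ i, {a // c a = i} ≃ {a // w a = i} := fun i =>
      Fintype.equivOfCardEq (by simp_rw [Fintype.card_subtype, h])
    exact ⟨Equiv.ofFiberEquiv e, funext (Equiv.ofFiberEquiv_map e)⟩

theorem sum_comp_eq_of_card_fiber_eq {M : Type*} [AddCommMonoid M] (f : ι → M) {u v : α → ι}
    (h : ∀ i, #{a | u a = i} = #{a | v a = i}) : ∑ a, f (u a) = ∑ a, f (v a) := by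
  obtain ⟨σ, rfl⟩ := exists_perm_comp_eq_iff.mpr h
  exact Equiv.sum_comp σ (f ∘ v)

variable [Fintype ι]

theorem exists_card_fiber_eq (ω : ι → ℕ) (hω : ∑ i, ω i = Fintype.card α) :
    ∃ w : α → ι, ∀ i, #{a | w a = i} = ω i := by
  let e : (Σ i, Fin (ω i)) ≃ α := Fintype.equivOfCardEq (by simp [hω])
  refine ⟨fun a => (e.symm a).1, fun i => ?_⟩
  rw [← Fintype.card_subtype, ← Fintype.card_fin (ω i)]
  exact Fintype.card_congr ((e.symm.subtypeEquiv fun _ => Iff.rfl).trans (Equiv.sigmaSubtype i))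

variable [DecidableEq α]

open MulAction in
theorem card_filter_card_fiber_eq_multinomial (ω : ι → ℕ) (hω : ∑ i, ω i = Fintype.card α) :
    #{c : α → ι | ∀ i, #{a | c a = i} = ω i} = Nat.multinomial univ ω := by
  obtain ⟨w, hw⟩ := exists_card_fiber_eq ω hω
  have horbit : orbit (Equiv.Perm α)ᵈᵐᵃ w =
      ↑({c : α → ι | ∀ i, #{a | c a = i} = ω i} : Finset _) := by
    ext c
    simp only [coe_filter, mem_univ, true_and, Set.mem_ofPred_eq, ← hw, ← exists_perm_comp_eq_iff]
    exact DomMulAct.mk.symm.exists_congr_left.trans (by simp [funext_iff, DomMulAct.smul_apply])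
  have hstab : Nat.card (stabilizer (Equiv.Perm α)ᵈᵐᵃ w) = ∏ i, (ω i).factorial := by
    rw [Nat.card_congr (Equiv.subtypeEquiv (q := fun g : Equiv.Perm α => w ∘ g = w)
      DomMulAct.mk.symm fun _ => DomMulAct.mem_stabilizer_iff),
      Nat.card_eq_fintype_card, DomMulAct.stabilizer_card]
    simp_rw [Fintype.card_subtype, hw]
  have key := (stabilizer (Equiv.Perm α)ᵈᵐᵃ w).card_mul_index
  rw [index_stabilizer, horbit, Set.ncard_coe_finset, hstab, Nat.card_congr DomMulAct.mk.symm,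
    Nat.card_perm, Nat.card_eq_fintype_card, ← hω, ← Nat.multinomial_spec] at key
  exact Nat.eq_of_mul_eq_mul_left (prod_pos fun i _ => Nat.factorial_pos _) key

end Words

theorem Finset.exists_card_le_card_fiber_mul_natCard {α β : Type*} [Finite β] [Nonempty β]
    [DecidableEq β] (s : Finset α) (f : α → β) : ∃ b, #s ≤ #{a ∈ s | f a = b} * Nat.card β := by
  have := Fintype.ofFinite β
  have hβ : (0 : ℚ) < Nat.card β := by exact_mod_cast Nat.card_pos
  obtain ⟨b, -, hb⟩ := exists_le_card_fiber_of_nsmul_le_card_of_maps_to (f := f) (t := univ)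
    (fun a _ => mem_univ _) univ_nonempty (b := (#s : ℚ) / Nat.card β)
    (by rw [nsmul_eq_mul, card_univ, ← Nat.card_eq_fintype_card, mul_div_cancel₀ _ hβ.ne'])
  rw [div_le_iff₀ hβ] at hb
  exact ⟨b, by exact_mod_cast hb⟩

def syndrome {R α β : Type*} [CommRing R] [Fintype α] (x : α → R) (ι : β → R) (m : ℕ)
    (c : α → β) : Fin m → R :=
  fun j => ∑ i, ι (c i) * x i ^ (j + 1 : ℕ)

theorem add_two_le_hammingDist_of_syndrome_eq {R α β : Type*} [CommRing R] [IsDomain R]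
    [DecidableEq R] [Fintype α] [DecidableEq α] [DecidableEq β] (p : ℕ) [Fact p.Prime]
    [CharP R p] {x : α → R} (hx : x.Injective) {ι : β → R} (hι : ι.Injective)
    (hιp : ∀ b, ι b ^ p = ι b) {d : ℕ} {u v : α → β}
    (hcomp : ∀ b, #{i | u i = b} = #{i | v i = b})
    (hsyn : syndrome x ι (d - 1) u = syndrome x ι (d - 1) v) (huv : u ≠ v) :
    (if p ∣ d then d else d - 1) + 2 ≤ hammingDist u v := by
  rw [← hammingDist_comp (fun _ => ι) fun _ => hι]
  refine add_two_le_hammingDist p hx (fun i => hιp _) (fun i => hιp _) (fun j hj => ?_)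
    fun h => huv (funext fun i => hι (congrFun h i))
  rcases j with _ | j
  · simp_rw [pow_zero, mul_one]
    exact sum_comp_eq_of_card_fiber_eq ι hcomp
  · exact congrFun hsyn ⟨j, by omega⟩

theorem stmt_0_general (q p r : ℕ) (hp : p.Prime) (hpq : q ≤ p)
    (hr : ∃ k : ℕ, 0 < k ∧ r = p ^ k)
    (d₀ : ℕ)
    (ω : Fin q → ℕ) (hω : ∑ a, ω a = r) :
    ∃ C : Finset (Fin r → Fin q),
      (∀ c ∈ C, ∀ a : Fin q, (Finset.univ.filter (fun i => c i = a)).card = ω a) ∧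
      (∀ u ∈ C, ∀ v ∈ C, u ≠ v →
        (if p ∣ d₀ then d₀ else d₀ - 1) + 2 ≤ hammingDist u v) ∧
      Nat.multinomial Finset.univ ω ≤ C.card * r ^ (d₀ - 1) := by
  classical
  obtain ⟨k, hk, rfl⟩ := hr
  have : Fact p.Prime := ⟨hp⟩
  let K := GaloisField p k
  have hK : Nat.card K = p ^ k := GaloisField.card p k hk.ne'
  let x : Fin (p ^ k) ≃ K := (Finite.equivFinOfCardEq hK).symm
  let ι : Fin q → K := fun a => (a : ℕ)
  let W : Finset (Fin (p ^ k) → Fin q) := {c | ∀ a, #{i | c i = a} = ω a}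
  obtain ⟨s, hs⟩ := W.exists_card_le_card_fiber_mul_natCard (syndrome x ι (d₀ - 1))
  refine ⟨{c ∈ W | syndrome x ι (d₀ - 1) c = s},
    fun c hc => (mem_filter.mp (mem_filter.mp hc).1).2, ?_, ?_⟩
  · intro u hu v hv huv
    simp only [W, mem_filter, mem_univ, true_and] at hu hv
    exact add_two_le_hammingDist_of_syndrome_eq p x.injective
      (fun a b h => Fin.ext (CharP.natCast_injOn_Iio K p (a.2.trans_le hpq) (b.2.trans_le hpq) h))
      (fun a => by rw [← frobenius_def, map_natCast]) (fun a => (hu.1 a).trans (hv.1 a).symm)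
      (hu.2.trans hv.2.symm) huv
  · have hW : #W = Nat.multinomial univ ω := by
      -- `convert` only has to reconcile the decidability instances of the two filters
      convert card_filter_card_fiber_eq_multinomial ω (by rw [Fintype.card_fin, hω])
    rwa [Nat.card_fun, Nat.card_fin, hK, hW] at hs

/-- Let `q ≥ 3` be an integer, `p` a prime with `p ≥ q`, and `r` a power
of `p`. For any positive integer `d₀` with `1 ≤ d₀ ≤ r - 2` and any composition
`ω` of `r`, there is a `q`-ary constant-composition code of length `r` with composition
`ω`, minimum distance at least `μ_p(d₀) + 2`, and size `M` with
`M · r^(d₀-1) ≥ r!/(ω₀!⋯ω_{q-1}!)`. Here `μ_p(e) = e` if `p ∣ e`, else `e - 1`. -/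
theorem stmt_0 (q p r : ℕ) (hq : 3 ≤ q) (hp : p.Prime) (hpq : q ≤ p)
    (hr : ∃ k : ℕ, 0 < k ∧ r = p ^ k)
    (d₀ : ℕ) (hd₀ : 1 ≤ d₀) (hd₀' : d₀ ≤ r - 2)
    (ω : Fin q → ℕ) (hω : ∑ a, ω a = r) :
    ∃ C : Finset (Fin r → Fin q),
      (∀ c ∈ C, ∀ a : Fin q, (Finset.univ.filter (fun i => c i = a)).card = ω a) ∧
      (∀ u ∈ C, ∀ v ∈ C, u ≠ v →
        (if p ∣ d₀ then d₀ else d₀ - 1) + 2 ≤ hammingDist u v) ∧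
      Nat.multinomial Finset.univ ω ≤ C.card * r ^ (d₀ - 1) :=
  stmt_0_general q p r hp hpq hr d₀ ω hω
end

section
/- Let r be a power of 3. Then for any composition [ω₀, ω₁, ω₂] of r, there exists a ternary constant-composition code C of length r with composition [ω₀, ω₁, ω₂] whose minimum distance is at least 5 and whose size M satisfies M · r² ≥ r!/(ω₀!·ω₁!·ω₂!). -/
/-!
Index the positions by the field `F = GF(3^k)`, so that `r = |F|`, and sort the words
of composition `ω` by their syndrome `(∑ c_x x, ∑ c_x x²) ∈ F²`; some syndrome class
contains at least a `1/r²` fraction of them. For distinct words `u, v` in one class, the difference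
`d = u - v` takes values in `𝔽₃`, so `d_x³ = d_x` and Frobenius gives
`∑ d_x x³ = (∑ d_x x)³`. Hence the power sums `∑ d_x x^j` vanish for `j = 0` (equal
compositions), `j = 1, 2` (equal syndromes) and `j = 3`. A nonzero vector supported on at most
four points cannot be orthogonal to the first four rows of a Vandermonde matrix, so `u` and `v`
differ in at least five positions.
-/

open Finset Nat

theorem Fintype.sum_comp_eq_of_card_filter_eq {ι α M : Type*} [Fintype ι] [Fintype α]
    [DecidableEq α] [AddCommMonoid M] {u v : ι → α}
    (h : ∀ a, #{i | u i = a} = #{i | v i = a}) (g : α → M) :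
    ∑ i, g (u i) = ∑ i, g (v i) := by
  rw [← Finset.sum_fiberwise' univ u g, ← Finset.sum_fiberwise' univ v g]
  simp only [sum_const, h]

theorem Finset.exists_card_le_card_fiber_mul {α β : Type*} [DecidableEq β] [Fintype β]
    [Nonempty β] (s : Finset α) (f : α → β) :
    ∃ y, #s ≤ #{a ∈ s | f a = y} * Fintype.card β := by
  obtain ⟨y, -, hy⟩ := exists_max_image univ (fun y => #{a ∈ s | f a = y}) univ_nonempty
  exact ⟨y, mul_comm (Fintype.card β) _ ▸
    card_le_mul_card_image_of_maps_to (fun _ _ => mem_univ _) _ fun b _ => hy b (mem_univ b)⟩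

def wordsOfComposition {m : ℕ} (n : ℕ) (ω : Fin m → ℕ) : Finset (Fin n → Fin m) :=
  {c | ∀ a, #{i | c i = a} = ω a}

theorem card_perm_comp_eq_comp {α β : Type*} [Fintype α] [DecidableEq α] [Fintype β]
    [DecidableEq β] (f : α → β) (g : Equiv.Perm α) :
    #{h : Equiv.Perm α | f ∘ h = f ∘ g} = ∏ b, (#{a | f a = b})! := by
  calc #{h : Equiv.Perm α | f ∘ h = f ∘ g}
        = Fintype.card {h : Equiv.Perm α // f ∘ h = f} := by
        rw [← Fintype.card_subtype]
        refine Fintype.card_congr ((Equiv.mulRight g⁻¹).subtypeEquiv fun h => ?_)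
        rw [Equiv.coe_mulRight, Equiv.Perm.coe_mul, Equiv.Perm.inv_def, ← Function.comp_assoc,
          Equiv.comp_symm_eq]
    _ = ∏ b, (#{a | f a = b})! := by
        rw [DomMulAct.stabilizer_card]
        simp only [Fintype.card_subtype]

/-- The words of composition `ω` contain an orbit of `Perm (Fin n)` whose stabilizers have
order `∏ a, (ω a)!`. -/
theorem multinomial_le_card_wordsOfComposition {m n : ℕ} (ω : Fin m → ℕ)
    (hω : ∑ a, ω a = n) :
    multinomial univ ω ≤ #(wordsOfComposition n ω) := by
  subst hω
  -- the word `0 ⋯ 0 1 ⋯ 1 ⋯` with `ω a` consecutive letters `a`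
  let c₀ : Fin (∑ a, ω a) → Fin m := fun i => (finSigmaFinEquiv.symm i).1
  have hc₀ (a : Fin m) : #{i | c₀ i = a} = ω a := by
    rw [← Fintype.card_subtype, Fintype.card_congr ((finSigmaFinEquiv.symm.subtypeEquiv
      fun _ => Iff.rfl).trans (Equiv.sigmaSubtype a)), Fintype.card_fin]
  have hmaps (g : Equiv.Perm (Fin (∑ a, ω a))) : c₀ ∘ g ∈ wordsOfComposition _ ω := by
    refine mem_filter.2 ⟨mem_univ _, fun a => ?_⟩
    rw [← hc₀, ← Fintype.card_subtype, ← Fintype.card_subtype]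
    exact Fintype.card_congr (g.subtypeEquiv fun _ => Iff.rfl)
  have hperm := card_le_mul_card_image (f := fun g : Equiv.Perm _ => c₀ ∘ g) univ _
    fun b hb => by
      obtain ⟨g, -, rfl⟩ := mem_image.1 hb
      exact (card_perm_comp_eq_comp c₀ g).le
  have himage := card_le_card (image_subset_iff.2 fun g (_ : g ∈ univ) => hmaps g)
  rw [Finset.card_univ, Fintype.card_perm, Fintype.card_fin] at hperm
  simp only [hc₀, ← multinomial_spec] at hperm
  exact Nat.le_of_mul_le_mul_left (hperm.trans (Nat.mul_le_mul_left _ himage))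
    (prod_pos fun a _ => factorial_pos _)

theorem eq_zero_of_sum_mul_pow_eq_zero {ι R : Type*} [Fintype ι] [CommRing R] [IsDomain R]
    [DecidableEq R] {x w : ι → R} (hx : Function.Injective x) {n : ℕ}
    (hsupp : #{i | w i ≠ 0} ≤ n) (hmom : ∀ k < n, ∑ i, w i * x i ^ k = 0) : w = 0 := by
  set D : Finset ι := {i | w i ≠ 0}
  let j : Fin #D ≃ D := D.equivFin.symm
  have hwj : (fun a => w (j a)) = 0 := by
    refine Matrix.eq_zero_of_vecMul_eq_zero (M := Matrix.vandermonde fun a => x (j a))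
      (Matrix.det_vandermonde_ne_zero_iff.2 (hx.comp (Subtype.val_injective.comp j.injective)))
      (funext fun k => ?_)
    rw [Pi.zero_apply, Matrix.vecMul, dotProduct]
    simp only [Matrix.vandermonde_apply]
    rw [← hmom k (k.2.trans_le hsupp), Equiv.sum_comp j (fun i : D => w i * x i ^ (k : ℕ)),
      sum_coe_sort D (fun i => w i * x i ^ (k : ℕ))]
    exact sum_subset (subset_univ _) fun i _ hi => by simp_all [D]
  ext i
  rw [Pi.zero_apply]
  by_contra hi
  have hiD : i ∈ D := by simpa [D] using hi
  simpa [j, hi] using congrFun hwj (j.symm ⟨i, hiD⟩)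

theorem sum_mul_pow_char {ι R : Type*} [Fintype ι] [CommRing R] (p : ℕ) [Fact p.Prime]
    [CharP R p] {x w : ι → R} (hw : ∀ i, w i ^ p = w i) :
    ∑ i, w i * x i ^ p = (∑ i, w i * x i) ^ p := by
  simp only [sum_pow_char, mul_pow, hw]

section PowerSums

variable {ι F : Type*} [Fintype ι] [Field F] {p : ℕ} [Fact p.Prime] [Algebra (ZMod p) F]

def weightedPowerSum (x : ι → F) (c : ι → ZMod p) (k : ℕ) : F :=
  ∑ i, algebraMap (ZMod p) F (c i) * x i ^ k

theorem le_hammingDist_of_weightedPowerSum_eq {x : ι → F} (hx : Function.Injective x)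
    {u v : ι → ZMod p} (hsum : ∀ k < p, weightedPowerSum x u k = weightedPowerSum x v k)
    (huv : u ≠ v) : p + 2 ≤ hammingDist u v := by
  classical
  have hp : p.Prime := Fact.out
  have : CharP F p := charP_of_injective_algebraMap' (ZMod p) p
  set w : ι → F := fun i => algebraMap (ZMod p) F (u i - v i)
  have hw_eq_zero (i : ι) : w i = 0 ↔ u i = v i := by
    rw [← sub_eq_zero (a := u i), ← map_eq_zero_iff _ (algebraMap (ZMod p) F).injective]
  have hw_pow (i : ι) : w i ^ p = w i := by simp only [w, ← map_pow, ZMod.pow_card]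
  have hw_sum (k : ℕ) :
      ∑ i, w i * x i ^ k = weightedPowerSum x u k - weightedPowerSum x v k := by
    simp [w, weightedPowerSum, sub_mul, sum_sub_distrib]
  have hw_sum_eq_zero : ∀ k < p + 1, ∑ i, w i * x i ^ k = 0 := by
    intro k hk
    rcases (Nat.lt_succ_iff.1 hk).lt_or_eq with hk | rfl
    · rw [hw_sum, hsum k hk, sub_self]
    · have h1 := hw_sum 1
      rw [hsum 1 hp.one_lt, sub_self] at h1
      simp only [pow_one] at h1
      rw [sum_mul_pow_char k hw_pow, h1, zero_pow hp.ne_zero]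
  by_contra! hlt
  have hsupp : #{i | w i ≠ 0} ≤ p + 1 := by
    simpa [hw_eq_zero, hammingDist] using Nat.lt_succ_iff.1 hlt
  refine huv (funext fun i => (hw_eq_zero i).1 ?_)
  rw [eq_zero_of_sum_mul_pow_eq_zero hx hsupp hw_sum_eq_zero, Pi.zero_apply]

end PowerSums

/-- Let `r` be a power of `3`. For any composition `[ω₀, ω₁, ω₂]` of `r`
there is a ternary constant-composition code of length `r` with composition `ω`,
minimum distance at least `5`, and size `M` with `M · r² ≥ r!/(ω₀!ω₁!ω₂!)`. -/
theorem stmt_3 (r : ℕ) (hr : ∃ k : ℕ, 0 < k ∧ r = 3 ^ k)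
    (ω : Fin 3 → ℕ) (hω : ∑ a, ω a = r) :
    ∃ C : Finset (Fin r → Fin 3),
      (∀ c ∈ C, ∀ a : Fin 3, (Finset.univ.filter (fun i => c i = a)).card = ω a) ∧
      (∀ u ∈ C, ∀ v ∈ C, u ≠ v → 5 ≤ hammingDist u v) ∧
      Nat.multinomial Finset.univ ω ≤ C.card * r ^ 2 := by
  classical
  obtain ⟨k, hk, rfl⟩ := hr
  have : Fact (Nat.Prime 3) := ⟨Nat.prime_three⟩
  let F := GaloisField 3 k
  let : Fintype F := Fintype.ofFinite F
  have hF : Fintype.card F = 3 ^ k := by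
    rw [← Nat.card_eq_fintype_card, GaloisField.card 3 k hk.ne']
  let x : Fin (3 ^ k) ≃ F := (Fintype.equivFinOfCardEq hF).symm
  let syndrome (c : Fin (3 ^ k) → ZMod 3) : F × F :=
    (weightedPowerSum x c 1, weightedPowerSum x c 2)
  obtain ⟨s, hs⟩ := (wordsOfComposition _ ω).exists_card_le_card_fiber_mul syndrome
  refine ⟨{c ∈ wordsOfComposition _ ω | syndrome c = s},
    fun c hc => (mem_filter.1 (mem_filter.1 hc).1).2, ?_, ?_⟩
  · intro u hu v hv huv
    simp only [mem_filter, wordsOfComposition, mem_univ, true_and] at hu hv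
    refine le_hammingDist_of_weightedPowerSum_eq x.injective (fun j hj => ?_) huv
    interval_cases j
    · simpa [weightedPowerSum] using Fintype.sum_comp_eq_of_card_filter_eq
        (fun a => (hu.1 a).trans (hv.1 a).symm) (algebraMap (ZMod 3) F)
    · exact congrArg Prod.fst (hu.2.trans hv.2.symm)
    · exact congrArg Prod.snd (hu.2.trans hv.2.symm)
  · rw [Fintype.card_prod, hF, ← sq] at hs
    exact (multinomial_le_card_wordsOfComposition ω hω).trans hs
end

section
/- Let q ≥ 3 be an integer, let p be a prime with p ≥ q and p > 3, and let r be a power of p. Then for any composition [ω₀, ω₁, …, ω_{q−1}] of r, there exists a q-ary constant-composition code C of length r with composition [ω₀, ω₁, …, ω_{q−1}] whose minimum distance is at least 4 and whose size M satisfies M · r² ≥ r!/(ω₀!·ω₁!⋯ω_{q−1}!). -/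
/-!
Identify the `r` positions with the elements `e i` of `𝔽_r` and the `q` symbols with distinct
elements of `𝔽_p ⊆ 𝔽_r` (possible as `q ≤ p`). Sort the words of the given composition by their
moments `∑ᵢ c(i) e(i)` and `∑ᵢ c(i) e(i)²`; some of the `r²` classes holds at least a `1 / r²`
fraction of the words. Two words of one class also share the zeroth moment `∑ᵢ c(i)`, which the
composition fixes, so their difference has vanishing moments of orders `0, 1, 2`. By Vandermonde
(pair it with the Lagrange basis polynomial of its support) such a nonzero vector has at least `4`
nonzero entries.
-/

open Finset Function

theorem Finset.exists_card_le_mul_card_fiber {α β : Type*} [Fintype β] [Nonempty β]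
    [DecidableEq β] (s : Finset α) (f : α → β) :
    ∃ y, #s ≤ Fintype.card β * #{x ∈ s | f x = y} := by
  by_contra! h
  have hs : #s = ∑ y, #{x ∈ s | f x = y} := card_eq_sum_card_fiberwise fun _ _ => mem_univ _
  have : ∑ y : β, Fintype.card β * #{x ∈ s | f x = y} < ∑ _y : β, #s :=
    sum_lt_sum_of_nonempty univ_nonempty fun y _ => h y
  rw [← mul_sum, ← hs, sum_const, card_univ, smul_eq_mul] at this
  exact this.false

theorem eq_zero_of_sum_mul_pow_eq_zero_s4 {ι F : Type*} [DecidableEq ι] [Field F] {D : Finset ι}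
    {m : ℕ} (hD : #D ≤ m) {e : ι → F} (he : Set.InjOn e D) {d : ι → F}
    (hd : ∀ n < m, ∑ i ∈ D, d i * e i ^ n = 0) {i₀ : ι} (hi₀ : i₀ ∈ D) : d i₀ = 0 := by
  set P := Lagrange.basis D e i₀
  have hP : P.natDegree < m := by
    rw [Lagrange.natDegree_basis he hi₀]
    have := card_pos.mpr ⟨i₀, hi₀⟩
    omega
  calc d i₀ = ∑ i ∈ D, d i * P.eval (e i) := by
        rw [sum_eq_single_of_mem i₀ hi₀ fun j hj hne =>
          by rw [Lagrange.eval_basis_of_ne hne.symm hj, mul_zero],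
          Lagrange.eval_basis_self he hi₀, mul_one]
    _ = ∑ n ∈ range m, P.coeff n * ∑ i ∈ D, d i * e i ^ n := by
        simp only [Polynomial.eval_eq_sum_range' hP, mul_sum]
        rw [sum_comm]
        exact sum_congr rfl fun _ _ => sum_congr rfl fun _ _ => by ring
    _ = 0 := sum_eq_zero fun n hn => by rw [hd n (mem_range.mp hn), mul_zero]

theorem lt_hammingDist_of_sum_mul_pow_eq {ι α F : Type*} [Fintype ι] [DecidableEq α] [Field F]
    {e : ι → F} (he : Injective e) {φ : α → F} (hφ : Injective φ) {m : ℕ} {u v : ι → α}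
    (huv : u ≠ v) (h : ∀ n < m, ∑ i, φ (u i) * e i ^ n = ∑ i, φ (v i) * e i ^ n) :
    m < hammingDist u v := by
  classical
  by_contra! hle
  set D : Finset ι := {i | u i ≠ v i}
  obtain ⟨i₀, hi₀⟩ : D.Nonempty := card_pos.mp (hammingDist_pos.mpr huv)
  refine (mem_filter.mp hi₀).2 (hφ (sub_eq_zero.mp ?_))
  refine eq_zero_of_sum_mul_pow_eq_zero_s4 (d := fun i => φ (u i) - φ (v i)) hle he.injOn
    (fun n hn => ?_) hi₀
  rw [sum_subset (subset_univ D) fun i _ hi => by simp [D] at hi; simp [hi]]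
  simp only [sub_mul, sum_sub_distrib, h n hn, sub_self]

section Composition

variable {ι α : Type*} [Fintype ι] [DecidableEq ι] [Fintype α] [DecidableEq α]

variable (ι) in
def wordsWithComposition (ω : α → ℕ) : Finset (ι → α) :=
  {c | ∀ a, #{i | c i = a} = ω a}

@[simp]
theorem mem_wordsWithComposition {ω : α → ℕ} {c : ι → α} :
    c ∈ wordsWithComposition ι ω ↔ ∀ a, #{i | c i = a} = ω a := by
  simp [wordsWithComposition]

theorem sum_comp_of_mem_wordsWithComposition {M : Type*} [AddCommMonoid M] {ω : α → ℕ}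
    {c : ι → α} (hc : c ∈ wordsWithComposition ι ω) (f : α → M) :
    ∑ i, f (c i) = ∑ a, ω a • f a := by
  rw [← sum_fiberwise univ c fun i => f (c i)]
  refine sum_congr rfl fun a _ => ?_
  rw [sum_congr rfl fun i hi => by rw [(mem_filter.mp hi).2], sum_const,
    mem_wordsWithComposition.mp hc a]

/-- The coefficient of `∏ₐ Xₐ ^ ωₐ` in `(∑ₐ Xₐ) ^ |ι| = ∑_c ∏ᵢ X_{c i}` counts both sides. -/
theorem card_wordsWithComposition {ω : α → ℕ} (hω : ∑ a, ω a = Fintype.card ι) :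
    #(wordsWithComposition ι ω) = Nat.multinomial univ ω := by
  open MvPolynomial in
  set d : α →₀ ℕ := Finsupp.equivFunOnFinite.symm ω
  have hd : (d.sum fun _ m => m) = Fintype.card ι := by
    rw [Finsupp.sum_fintype _ _ fun _ => rfl]
    exact hω
  have multinomial_thm := coeff_sum_X_pow_of_fintype (R := ℕ) d (Fintype.card ι)
  rw [if_pos hd, Finsupp.multinomial_eq_of_support_subset (subset_univ _), Nat.cast_id,
    Finsupp.coe_equivFunOnFinite_symm, ← card_univ, ← prod_const, Fintype.prod_sum,
    coeff_sum] at multinomial_thm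
  rw [← multinomial_thm]
  simp only [X, ← monomial_sum_one, coeff_monomial]
  rw [sum_boole, Nat.cast_id, wordsWithComposition]
  congr 1
  ext c
  simp [Finsupp.ext_iff, Finsupp.finsetSum_apply, Finsupp.single_apply, d]

theorem exists_subset_wordsWithComposition_le_hammingDist {F : Type*} [Field F] [Fintype F]
    {e : ι → F} (he : Injective e) {φ : α → F} (hφ : Injective φ) (ω : α → ℕ) (t : ℕ) :
    ∃ C ⊆ wordsWithComposition ι ω, (∀ u ∈ C, ∀ v ∈ C, u ≠ v → t + 2 ≤ hammingDist u v) ∧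
      #(wordsWithComposition ι ω) ≤ #C * Fintype.card F ^ t := by
  classical
  let moments (c : ι → α) (n : Fin t) : F := ∑ i, φ (c i) * e i ^ (n + 1 : ℕ)
  obtain ⟨s, hs⟩ := exists_card_le_mul_card_fiber (wordsWithComposition ι ω) moments
  refine ⟨{c ∈ wordsWithComposition ι ω | moments c = s}, filter_subset _ _, fun u hu v hv huv => ?_, ?_⟩
  · rw [mem_filter] at hu hv
    refine lt_hammingDist_of_sum_mul_pow_eq he hφ huv fun n hn => ?_
    cases n with
    | zero =>
      simp only [pow_zero, mul_one, sum_comp_of_mem_wordsWithComposition hu.1,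
        sum_comp_of_mem_wordsWithComposition hv.1]
    | succ n => exact congrFun (hu.2.trans hv.2.symm) ⟨n, by omega⟩
  · rwa [Fintype.card_fun, Fintype.card_fin, mul_comm] at hs

end Composition

theorem stmt_4_general (q p r : ℕ) (hp : p.Prime) (hpq : q ≤ p)
    (hr : ∃ k : ℕ, 0 < k ∧ r = p ^ k)
    (ω : Fin q → ℕ) (hω : ∑ a, ω a = r) :
    ∃ C : Finset (Fin r → Fin q),
      (∀ c ∈ C, ∀ a : Fin q, (Finset.univ.filter (fun i => c i = a)).card = ω a) ∧
      (∀ u ∈ C, ∀ v ∈ C, u ≠ v → 4 ≤ hammingDist u v) ∧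
      Nat.multinomial Finset.univ ω ≤ C.card * r ^ 2 := by
  obtain ⟨k, hk, rfl⟩ := hr
  have := Fact.mk hp
  let F := GaloisField p k
  let _ : Fintype F := Fintype.ofFinite F
  have hF : Fintype.card F = p ^ k := by
    rw [← Nat.card_eq_fintype_card]
    exact GaloisField.card p k hk.ne'
  have hφ : Injective fun a : Fin q => ((a : ℕ) : F) := fun a b h =>
    Fin.ext (CharP.natCast_injOn_Iio F p (by grind) (by grind) h)
  obtain ⟨C, hC, hdist, hcard⟩ := exists_subset_wordsWithComposition_le_hammingDist
    (Fintype.equivFinOfCardEq hF).symm.injective hφ ω 2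
  refine ⟨C, fun c hc => mem_wordsWithComposition.mp (hC hc), hdist, ?_⟩
  rwa [card_wordsWithComposition (by rwa [Fintype.card_fin]), hF] at hcard

/-- Let `q ≥ 3` be an integer, `p` a prime with `p ≥ q` and `p > 3`, and
`r` a power of `p`. For any composition `ω` of `r`, there is a `q`-ary
constant-composition code of length `r` with composition `ω`, minimum distance at least
`4`, and size `M` with `M · r² ≥ r!/(ω₀!⋯ω_{q-1}!)`. -/
theorem stmt_4 (q p r : ℕ) (hq : 3 ≤ q) (hp : p.Prime) (hpq : q ≤ p) (hp3 : 3 < p)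
    (hr : ∃ k : ℕ, 0 < k ∧ r = p ^ k)
    (ω : Fin q → ℕ) (hω : ∑ a, ω a = r) :
    ∃ C : Finset (Fin r → Fin q),
      (∀ c ∈ C, ∀ a : Fin q, (Finset.univ.filter (fun i => c i = a)).card = ω a) ∧
      (∀ u ∈ C, ∀ v ∈ C, u ≠ v → 4 ≤ hammingDist u v) ∧
      Nat.multinomial Finset.univ ω ≤ C.card * r ^ 2 :=
  stmt_4_general q p r hp hpq hr ω hω
end

section
/- Let q ≥ 3, let [ω₀, ω₁, …, ω_{q−1}] be a composition of n, let d ≥ 1, and set δ = ⌊(d−1)/2⌋. Fix an index i with 0 ≤ i ≤ q−1, and let δ_{i,0}, …, δ_{i,q−1} be nonnegative integers with δ_{i,i} = 0, δ_{i,0} + ⋯ + δ_{i,q−1} = δ, and δ_{i,l} ≤ ω_l for all 0 ≤ l ≤ q−1. Then every q-ary constant-composition code C of length n with composition [ω₀, ω₁, …, ω_{q−1}] and minimum distance at least d satisfies |C| · ((ω_i + δ)!/(ω_i!·δ_{i,0}!⋯δ_{i,q−1}!)) ≤ n!/(ω₀!·ω₁!⋯ω_{q−1}!). -/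
/-!
Fix a codeword `w` and a set `F` of positions consisting of all positions where `w` equals `i`
and `δᵢ l` positions where it equals `l`. The words obtained from `w` by rearranging its symbols
inside `F` have the composition of `w`, and each has exactly `δ` symbols other than `i` inside `F`,
so any two of them are at distance at most `2δ < d`; there are `(ωᵢ + δ)!/(ωᵢ! ∏ₗ δᵢ l!)` of
them. Such an anticode `A` and the code `C` satisfy `|C| |A| ≤ n!/∏ₐ ωₐ!`: the pairs `(c, g)`
with `c ∈ C`, `g` a permutation of the coordinates and `c ∘ g ∈ A` number `|C| |A| ∏ₐ ωₐ!`,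
while each `g` admits at most one `c` because permuting coordinates preserves distances.
-/

open Finset Nat

lemma Nat.multinomial_option_elim_eq_update {α : Type*} [Fintype α] [DecidableEq α] {f : α → ℕ}
    {i : α} (hi : f i = 0) (m : ℕ) :
    Nat.multinomial univ (fun o : Option α => o.elim m f) =
      Nat.multinomial univ (Function.update f i m) := by
  have hcompl : ∀ a ∈ ({i}ᶜ : Finset α), Function.update f i m a = f a := fun a ha =>
    Function.update_of_ne (by simpa using ha) m f
  simp only [Nat.multinomial, Fintype.sum_option, Fintype.prod_option, Option.elim,
    Fintype.prod_eq_mul_prod_compl i, Fintype.sum_eq_add_sum_compl i, hi, Function.update_self,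
    sum_congr rfl hcompl, prod_congr rfl fun a ha => congrArg Nat.factorial (hcompl a ha)]
  simp

namespace CompositionCode

variable {β α : Type*} [DecidableEq α]

def composition [Fintype β] (x : β → α) (a : α) : ℕ := #{j | x j = a}

lemma composition_restrict [DecidableEq β] (x : β → α) (F : Finset β) (a : α) :
    composition (F.restrict x) a = #{j ∈ F | x j = a} := by
  rw [composition, card_filter, card_filter]
  exact sum_coe_sort F (fun j => if x j = a then 1 else 0)

variable [Fintype β]

lemma composition_comp_perm (x : β → α) (g : Equiv.Perm β) :
    composition (x ∘ g) = composition x := by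
  ext a
  exact card_equiv g (by simp)

lemma hammingDist_comp_perm (u v : β → α) (g : Equiv.Perm β) :
    hammingDist (u ∘ g) (v ∘ g) = hammingDist u v :=
  card_equiv g (by simp)

lemma exists_comp_perm_eq [DecidableEq β] {u v : β → α} (h : composition u = composition v) :
    ∃ g : Equiv.Perm β, u ∘ g = v := by
  have e : ∀ a, {j // v j = a} ≃ {j // u j = a} := fun a =>
    Fintype.equivOfCardEq (by simp only [Fintype.card_subtype]; exact (congrFun h a).symm)
  exact ⟨Equiv.ofFiberEquiv e, funext fun j => Equiv.ofFiberEquiv_map e j⟩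

variable [Fintype α]

lemma sum_composition (x : β → α) : ∑ a, composition x a = Fintype.card β :=
  (card_eq_sum_card_fiberwise fun j _ => mem_univ (x j)).symm

lemma prod_factorial_composition_mul_multinomial (x : β → α) :
    (∏ a, (composition x a)!) * Nat.multinomial univ (composition x) = (Fintype.card β)! := by
  rw [Nat.multinomial_spec, sum_composition]

variable [DecidableEq β]

lemma card_perm_comp_eq {u v : β → α} (h : composition u = composition v) :
    #{g : Equiv.Perm β | u ∘ g = v} = ∏ a, (composition u a)! := by
  obtain ⟨g₀, rfl⟩ := exists_comp_perm_eq h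
  have hstab := DomMulAct.stabilizer_card u
  simp only [Fintype.card_subtype] at hstab
  refine (card_equiv (Equiv.mulRight g₀⁻¹) fun g => ?_).trans hstab
  simp [← Function.comp_assoc, Equiv.Perm.inv_def, Equiv.comp_symm_eq]

theorem card_composition_eq (w : β → α) :
    #{x : β → α | composition x = composition w} = Nat.multinomial univ (composition w) := by
  have hfib : (Fintype.card β)! = #{x : β → α | composition x = composition w} *
      ∏ a, (composition w a)! :=
    calc (Fintype.card β)! = #(univ : Finset (Equiv.Perm β)) := by
          rw [Finset.card_univ, Fintype.card_perm]
      _ = ∑ x ∈ {x : β → α | composition x = composition w}, #{g : Equiv.Perm β | w ∘ g = x} :=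
          card_eq_sum_card_fiberwise fun g _ => by simp [composition_comp_perm]
      _ = _ := by
          rw [sum_congr rfl fun x hx => card_perm_comp_eq (mem_filter.1 hx).2.symm, sum_const,
            smul_eq_mul]
  refine Nat.eq_of_mul_eq_mul_right (prod_factorial_pos univ (composition w)) ?_
  rw [← hfib, mul_comm, prod_factorial_composition_mul_multinomial]

theorem card_mul_card_le_multinomial {C A : Finset (β → α)} {ω : α → ℕ} {d : ℕ}
    (hω : ∑ a, ω a = Fintype.card β)
    (hC : ∀ c ∈ C, composition c = ω) (hA : ∀ x ∈ A, composition x = ω)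
    (hCd : ∀ c ∈ C, ∀ c' ∈ C, c ≠ c' → d ≤ hammingDist c c')
    (hAd : ∀ x ∈ A, ∀ x' ∈ A, hammingDist x x' < d) :
    #C * #A ≤ Nat.multinomial univ ω := by
  have hfiber : ∀ c ∈ C, #{g : Equiv.Perm β | c ∘ g ∈ A} = #A * ∏ a, (ω a)! := by
    intro c hc
    have hmaps : Set.MapsTo (fun g : Equiv.Perm β => c ∘ g)
        ({g | c ∘ g ∈ A} : Finset (Equiv.Perm β)) A := fun g hg => (mem_filter.1 hg).2
    rw [card_eq_sum_card_fiberwise hmaps, ← smul_eq_mul, ← sum_const]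
    refine sum_congr rfl fun x hx => ?_
    rw [filter_filter, ← hC c hc, ← card_perm_comp_eq (v := x) (by rw [hC c hc, hA x hx])]
    exact congrArg card (filter_congr fun g _ => ⟨fun h => h.2, fun h => ⟨h ▸ hx, h⟩⟩)
  have hsingle : ∀ g : Equiv.Perm β, #{c ∈ C | c ∘ g ∈ A} ≤ 1 := by
    refine fun g => card_le_one.2 fun c hc c' hc' => ?_
    rw [mem_filter] at hc hc'
    by_contra hne
    have hlt := hAd _ hc.2 _ hc'.2
    rw [hammingDist_comp_perm] at hlt
    exact (hCd c hc.1 c' hc'.1 hne).not_gt hlt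
  have hcount : #C * #A * ∏ a, (ω a)! ≤ (Fintype.card β)! :=
    calc #C * #A * ∏ a, (ω a)! = ∑ c ∈ C, #{g : Equiv.Perm β | c ∘ g ∈ A} := by
          rw [sum_congr rfl hfiber, sum_const, smul_eq_mul, mul_assoc]
      _ = ∑ g : Equiv.Perm β, #{c ∈ C | c ∘ g ∈ A} :=
          sum_card_bipartiteAbove_eq_sum_card_bipartiteBelow _
      _ ≤ ∑ _g : Equiv.Perm β, 1 := sum_le_sum fun g _ => hsingle g
      _ = (Fintype.card β)! := by simp [Fintype.card_perm]
  rw [← hω, ← Nat.multinomial_spec, mul_comm (∏ _ ∈ _, _)] at hcount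
  exact Nat.le_of_mul_le_mul_right hcount (prod_factorial_pos _ _)

lemma exists_finset_card_filter_eq (w : β → α) {m : α → ℕ} (hm : ∀ a, m a ≤ composition w a) :
    ∃ F : Finset β, ∀ a, #{j ∈ F | w j = a} = m a := by
  choose T hTw hTcard using fun a => exists_subset_card_eq (hm a)
  refine ⟨univ.biUnion T, fun a => ?_⟩
  have hfiber : {j ∈ univ.biUnion T | w j = a} = T a := by
    ext j
    simp only [mem_filter, mem_biUnion, mem_univ, true_and]
    constructor
    · rintro ⟨⟨b, hb⟩, rfl⟩
      rwa [(mem_filter.1 (hTw b hb)).2]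
    · exact fun h => ⟨⟨a, h⟩, (mem_filter.1 (hTw a h)).2⟩
  rw [hfiber, hTcard]

def rearrangementsOn (w : β → α) (F : Finset β) : Finset (β → α) :=
  {x | (∀ j ∉ F, x j = w j) ∧ ∀ a, #{j ∈ F | x j = a} = #{j ∈ F | w j = a}}

variable {w x x' : β → α} {F : Finset β}

lemma composition_of_mem_rearrangementsOn (hx : x ∈ rearrangementsOn w F) :
    composition x = composition w := by
  rw [rearrangementsOn, mem_filter] at hx
  ext a
  have hF := hx.2.2 a
  rw [card_filter, card_filter] at hF
  rw [composition, composition, card_filter, card_filter, ← sum_add_sum_compl F,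
    ← sum_add_sum_compl F (fun j => if w j = a then 1 else 0), hF]
  exact congrArg _ (sum_congr rfl fun j hj => by rw [hx.2.1 j (mem_compl.1 hj)])

lemma hammingDist_le_of_mem_rearrangementsOn (hx : x ∈ rearrangementsOn w F)
    (hx' : x' ∈ rearrangementsOn w F) (i : α) :
    hammingDist x x' ≤ 2 * (#F - #{j ∈ F | w j = i}) := by
  have hne : ∀ y ∈ rearrangementsOn w F, #{j ∈ F | y j ≠ i} = #F - #{j ∈ F | w j = i} := by
    intro y hy
    rw [← (mem_filter.1 hy).2.2 i, ← card_filter_add_card_filter_not (s := F) (fun j => y j = i)]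
    simp only [ne_eq, add_tsub_cancel_left]
  have hsub : ({j | x j ≠ x' j} : Finset β) ⊆ {j ∈ F | x j ≠ i} ∪ {j ∈ F | x' j ≠ i} := by
    intro j hj
    simp only [mem_filter, mem_univ, true_and, mem_union] at hj ⊢
    have hjF : j ∈ F := by
      by_contra hjF
      exact hj (((mem_filter.1 hx).2.1 j hjF).trans ((mem_filter.1 hx').2.1 j hjF).symm)
    by_cases hxi : x j = i
    · exact Or.inr ⟨hjF, fun h => hj (hxi.trans h.symm)⟩
    · exact Or.inl ⟨hjF, hxi⟩
  calc hammingDist x x' ≤ #({j ∈ F | x j ≠ i} ∪ {j ∈ F | x' j ≠ i}) := card_le_card hsub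
    _ ≤ #{j ∈ F | x j ≠ i} + #{j ∈ F | x' j ≠ i} := card_union_le _ _
    _ = 2 * (#F - #{j ∈ F | w j = i}) := by rw [hne x hx, hne x' hx']; ring

theorem card_rearrangementsOn (w : β → α) (F : Finset β) :
    #(rearrangementsOn w F) = Nat.multinomial univ (fun a => #{j ∈ F | w j = a}) := by
  have hrestrict : ∀ y : F → α, F.restrict (Function.extend Subtype.val y w) = y := fun y =>
    funext fun p => Subtype.val_injective.extend_apply y w p
  rw [← funext (composition_restrict w F), ← card_composition_eq]
  refine card_nbij' F.restrict (fun y => Function.extend Subtype.val y w) ?_ ?_ ?_ ?_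
  · intro x hx
    simp only [rearrangementsOn, coe_filter, mem_univ, true_and, Set.mem_ofPred_eq] at hx ⊢
    exact funext fun a => by rw [composition_restrict, composition_restrict, hx.2 a]
  · intro y hy
    simp only [rearrangementsOn, coe_filter, mem_univ, true_and, Set.mem_ofPred_eq] at hy ⊢
    refine ⟨fun j hj => Function.extend_apply' _ _ _ fun ⟨p, hp⟩ => hj (hp ▸ p.2), fun a => ?_⟩
    rw [← composition_restrict, ← composition_restrict, hrestrict, hy]
  · intro x hx
    simp only [rearrangementsOn, coe_filter, mem_univ, true_and, Set.mem_ofPred_eq] at hx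
    funext j
    by_cases hj : j ∈ F
    · exact Subtype.val_injective.extend_apply _ w ⟨j, hj⟩
    · exact (Function.extend_apply' _ _ _ fun ⟨p, hp⟩ => hj (hp ▸ p.2)).trans (hx.1 j hj).symm
  · exact fun y _ => hrestrict y

end CompositionCode

open CompositionCode in
theorem stmt_10_general (q n d : ℕ) (hd : 1 ≤ d)
    (ω : Fin q → ℕ) (hω : ∑ a, ω a = n)
    (δ : ℕ) (hδ : δ = (d - 1) / 2)
    (i : Fin q) (δᵢ : Fin q → ℕ) (hδᵢi : δᵢ i = 0)
    (hδᵢsum : ∑ l, δᵢ l = δ) (hδᵢle : ∀ l, δᵢ l ≤ ω l)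
    (C : Finset (Fin n → Fin q))
    (hcomp : ∀ c ∈ C, ∀ a : Fin q, (Finset.univ.filter (fun j => c j = a)).card = ω a)
    (hdist : ∀ u ∈ C, ∀ v ∈ C, u ≠ v → d ≤ hammingDist u v) :
    C.card * Nat.multinomial Finset.univ
        (fun o : Option (Fin q) => o.elim (ω i) δᵢ) ≤
      Nat.multinomial Finset.univ ω := by
  obtain rfl | ⟨w, hw⟩ := C.eq_empty_or_nonempty
  · simp
  have hwω : composition w = ω := funext (hcomp w hw)
  obtain ⟨F, hF⟩ := exists_finset_card_filter_eq w (m := Function.update δᵢ i (ω i)) fun a => by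
    rcases eq_or_ne a i with rfl | ha
    · simp [hwω]
    · simpa [ha, hwω] using hδᵢle a
  have hFi : #{j ∈ F | w j = i} = ω i := by simpa using hF i
  have hFcard : #F = ω i + δ := by
    rw [card_eq_sum_card_fiberwise (f := w) (t := univ) fun _ _ => mem_univ _,
      sum_congr rfl fun a _ => hF a, sum_update_of_mem (mem_univ i), ← hδᵢsum,
      sum_eq_add_sum_sdiff_singleton_of_mem (mem_univ i), hδᵢi, zero_add]
  calc C.card * Nat.multinomial univ (fun o : Option (Fin q) => o.elim (ω i) δᵢ)
      = #C * #(rearrangementsOn w F) := by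
        rw [card_rearrangementsOn, funext hF, Nat.multinomial_option_elim_eq_update hδᵢi]
    _ ≤ Nat.multinomial univ ω := by
        refine card_mul_card_le_multinomial (d := d) (by simp [hω])
          (fun c hc => funext (hcomp c hc))
          (fun x hx => (composition_of_mem_rearrangementsOn hx).trans hwω) hdist
          fun x hx x' hx' => ?_
        have hdiam := hammingDist_le_of_mem_rearrangementsOn hx hx' i
        omega

/-- Let `q ≥ 3`, let `ω` be a composition of `n`, let `d ≥ 1`, and set
`δ = ⌊(d-1)/2⌋`. Fix `i` and nonnegative integers `δᵢ 0, …, δᵢ (q-1)` with `δᵢ i = 0`,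
`∑ l, δᵢ l = δ` and `δᵢ l ≤ ω l` for all `l`. Then every `q`-ary constant-composition
code `C` of length `n` with composition `ω` and minimum distance at least `d` satisfies
`|C| · (ωᵢ + δ)!/(ωᵢ! · δᵢ0! ⋯ δᵢ(q-1)!) ≤ n!/(ω₀!⋯ω_{q-1}!)`. -/
theorem stmt_10 (q n d : ℕ) (hq : 3 ≤ q) (hd : 1 ≤ d)
    (ω : Fin q → ℕ) (hω : ∑ a, ω a = n)
    (δ : ℕ) (hδ : δ = (d - 1) / 2)
    (i : Fin q) (δᵢ : Fin q → ℕ) (hδᵢi : δᵢ i = 0)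
    (hδᵢsum : ∑ l, δᵢ l = δ) (hδᵢle : ∀ l, δᵢ l ≤ ω l)
    (C : Finset (Fin n → Fin q))
    (hcomp : ∀ c ∈ C, ∀ a : Fin q, (Finset.univ.filter (fun j => c j = a)).card = ω a)
    (hdist : ∀ u ∈ C, ∀ v ∈ C, u ≠ v → d ≤ hammingDist u v) :
    C.card * Nat.multinomial Finset.univ
        (fun o : Option (Fin q) => o.elim (ω i) δᵢ) ≤
      Nat.multinomial Finset.univ ω :=
  stmt_10_general q n d hd ω hω δ hδ i δᵢ hδᵢi hδᵢsum hδᵢle C hcomp hdist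
end

section
/- Let [ω₀, ω₁, ω₂] be a composition of n, and let i ∈ {0, 1, 2} be an index such that the other two indices j, k satisfy ω_j ≥ 1 and ω_k ≥ 1. Then every ternary constant-composition code C of length n with composition [ω₀, ω₁, ω₂] and minimum distance at least 5 satisfies |C| · (ω_i + 2)(ω_i + 1) ≤ n!/(ω₀!·ω₁!·ω₂!). -/
/-!
Fix the two letters `j, k ≠ i`. Overwriting, in a codeword, one occurrence of `j` and one of
`k` by `i` yields `ω j * ω k` words of the composition `ω + 2 e_i - e_j - e_k`. Each such word
is within distance `2` of its codeword, so for minimum distance `5` no word arises from two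
codewords, and all `|C| ω_j ω_k` words are distinct. Hence, with `M` the multinomial coefficient,
`|C| ω_j ω_k ≤ M(ω + 2 e_i - e_j - e_k) = M(ω) ω_j ω_k / ((ω_i + 2)(ω_i + 1))`.
-/

open Finset Function
open scoped Nat

variable {ι β : Type*}

section Words

variable [Fintype ι] [DecidableEq β]

lemma exists_perm_comp_eq_of_card_fiber_eq {v w : ι → β}
    (h : ∀ b, #{x | v x = b} = #{x | w x = b}) : ∃ σ : Equiv.Perm ι, v ∘ σ = w :=
  ⟨Equiv.ofFiberEquiv fun b => Fintype.equivOfCardEq (by simp only [Fintype.card_subtype, h]),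
    funext fun x => Equiv.ofFiberEquiv_map _ x⟩

/-- The words of a fixed composition form one orbit of `Perm ι`, on which every fibre of
`σ ↦ v ∘ σ` is a coset of the stabilizer of `v`, of order `∏ b, (ω b)!`. -/
theorem card_le_multinomial_of_card_fiber_eq [DecidableEq ι] [Fintype β] (ω : β → ℕ)
    (W : Finset (ι → β)) (hW : ∀ w ∈ W, ∀ b, #{x | w x = b} = ω b) :
    #W ≤ Nat.multinomial univ ω := by
  obtain rfl | ⟨v, hv⟩ := W.eq_empty_or_nonempty
  · simp
  have hsum : ∑ b, ω b = Fintype.card ι := by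
    simp only [← hW v hv]
    exact (card_eq_sum_card_fiberwise fun x _ => mem_univ (v x)).symm
  have hstab : Fintype.card {g : Equiv.Perm ι // v ∘ g = v} = ∏ b, (ω b)! := by
    rw [DomMulAct.stabilizer_card]
    simp only [Fintype.card_subtype, hW v hv]
  have hfiber : ∀ w ∈ univ.image fun σ : Equiv.Perm ι => v ∘ σ,
      ∏ b, (ω b)! ≤ #{τ : Equiv.Perm ι | v ∘ τ = w} := by
    intro w hw
    obtain ⟨σ, -, rfl⟩ := mem_image.1 hw
    rw [← hstab, ← Fintype.card_subtype]
    refine Fintype.card_le_of_injective (fun g => ⟨g.1 * σ, ?_⟩) fun g g' h => ?_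
    · rw [Equiv.Perm.coe_mul, ← comp_assoc, g.2]
    · exact Subtype.ext (by simpa using h)
  have hsub : W ⊆ univ.image fun σ : Equiv.Perm ι => v ∘ σ := fun w hw =>
    have ⟨σ, hσ⟩ :=
      exists_perm_comp_eq_of_card_fiber_eq fun b => (hW v hv b).trans (hW w hw b).symm
    mem_image.2 ⟨σ, mem_univ _, hσ⟩
  have hbound := mul_card_image_le_card univ _ hfiber
  rw [card_univ, Fintype.card_perm, ← hsum, ← Nat.multinomial_spec] at hbound
  exact (card_le_card hsub).trans (Nat.le_of_mul_le_mul_left hbound (by positivity))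

lemma card_filter_update_add [DecidableEq ι] (c : ι → β) (p : ι) (i a : β) :
    #{x | update c p i x = a} + (if c p = a then 1 else 0)
      = #{x | c x = a} + (if i = a then 1 else 0) := by
  simp only [card_filter, ← add_sum_erase univ _ (mem_univ p), update_self]
  rw [sum_congr rfl fun x hx => by rw [update_of_ne (ne_of_mem_erase hx)]]
  ring

lemma card_filter_update_eq [DecidableEq ι] {ω : β → ℕ} {c : ι → β}
    (hc : ∀ a, #{x | c x = a} = ω a) {p : ι} {i : β} (hi : c p ≠ i) (a : β) :
    #{x | update c p i x = a} = (ω - Pi.single (c p) 1 + Pi.single i 1 : β → ℕ) a := by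
  have hpos : 0 < ω (c p) := hc (c p) ▸ card_pos.2 ⟨p, by simp⟩
  have := card_filter_update_add c p i a
  simp only [Pi.add_apply, Pi.sub_apply, Pi.single_apply, hc] at this ⊢
  split_ifs at this ⊢ <;> subst_vars <;> simp_all
  omega

end Words

lemma Nat.multinomial_sub_single_add_single_mul [Fintype β] [DecidableEq β] {ω : β → ℕ} {i j : β}
    (hij : i ≠ j) (hj : 0 < ω j) :
    Nat.multinomial univ (ω - Pi.single j 1 + Pi.single i 1) * (ω i + 1)
      = Nat.multinomial univ ω * ω j := by
  set ω' := ω - Pi.single j 1 + Pi.single i 1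
  have hj_mem : j ∈ univ.erase i := mem_erase.2 ⟨hij.symm, mem_univ _⟩
  have hrest : ∀ b ∈ (univ.erase i).erase j, ω' b = ω b := fun b hb => by
    obtain ⟨hbj, hbi⟩ := by simpa using hb
    simp [ω', hbi, hbj]
  obtain ⟨m, hm⟩ := Nat.exists_eq_add_one_of_ne_zero hj.ne'
  have hi' : ω' i = ω i + 1 := by simp [ω', hij]
  have hj' : ω' j = m := by simp [ω', hij.symm, hm]
  have hsum : ∑ b, ω' b = ∑ b, ω b := by
    rw [← add_sum_erase _ _ (mem_univ i), ← add_sum_erase _ _ hj_mem,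
      ← add_sum_erase _ _ (mem_univ i), ← add_sum_erase _ _ hj_mem, sum_congr rfl hrest, hi', hj',
      hm]
    ring
  have hprod : (∏ b, (ω' b)!) * ω j = (∏ b, (ω b)!) * (ω i + 1) := by
    rw [← mul_prod_erase _ _ (mem_univ i), ← mul_prod_erase _ _ hj_mem,
      ← mul_prod_erase _ _ (mem_univ i), ← mul_prod_erase _ _ hj_mem,
      prod_congr rfl fun b hb => congrArg Nat.factorial (hrest b hb), hi', hj', hm,
      Nat.factorial_succ, Nat.factorial_succ]
    ring
  apply Nat.eq_of_mul_eq_mul_left (show 0 < ∏ b, (ω b)! by positivity)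
  calc (∏ b, (ω b)!) * (Nat.multinomial univ ω' * (ω i + 1))
      = Nat.multinomial univ ω' * ((∏ b, (ω b)!) * (ω i + 1)) := by ring
    _ = (∏ b, (ω' b)!) * Nat.multinomial univ ω' * ω j := by rw [← hprod]; ring
    _ = (∏ b, (ω b)!) * Nat.multinomial univ ω * ω j := by
      rw [Nat.multinomial_spec, Nat.multinomial_spec, hsum]
    _ = (∏ b, (ω b)!) * (Nat.multinomial univ ω * ω j) := by ring

section TwoLetterChanges

lemma update_update_eq_self_iff [DecidableEq ι] (c : ι → β) (p q : ι) (i : β) (x : ι) :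
    update (update c p i) q i x = i ↔ x = p ∨ x = q ∨ c x = i := by
  simp only [update_apply]
  split_ifs <;> tauto

variable [Fintype ι] [DecidableEq ι] [DecidableEq β]

lemma hammingDist_update_le (c : ι → β) (p : ι) (b : β) : hammingDist c (update c p b) ≤ 1 := by
  refine (card_le_card fun x hx => ?_).trans (card_singleton p).le
  by_contra hxp
  simp [update_of_ne (mem_singleton.not.1 hxp)] at hx

lemma hammingDist_update_update_le (c : ι → β) (p q : ι) (a b : β) :
    hammingDist c (update (update c p a) q b) ≤ 2 :=
  (hammingDist_triangle _ (update c p a) _).trans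
    (Nat.add_le_add (hammingDist_update_le _ _ _) (hammingDist_update_le _ _ _))

lemma card_filter_update_update_eq {ω : β → ℕ} {c : ι → β} (hc : ∀ a, #{x | c x = a} = ω a)
    {p q : ι} {i j k : β} (hp : c p = j) (hq : c q = k) (hij : i ≠ j) (hik : i ≠ k)
    (hjk : j ≠ k) (a : β) :
    #{x | update (update c p i) q i x = a}
      = (ω - Pi.single j 1 + Pi.single i 1 - Pi.single k 1 + Pi.single i 1 : β → ℕ) a := by
  have hq' : update c p i q = k := by
    rw [update_of_ne fun hqp => hjk (hp ▸ hq ▸ congrArg c hqp.symm)]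
    exact hq
  rw [card_filter_update_eq (card_filter_update_eq hc (hp ▸ hij.symm)) (hq' ▸ hik.symm), hq', hp]

/-- Inside one codeword, `p` (resp. `q`) is recovered as the unique position turned into `i`
that carried `j` (resp. `k`). -/
lemma injOn_update_update {C : Finset (ι → β)}
    (hC : ∀ u ∈ C, ∀ v ∈ C, u ≠ v → 5 ≤ hammingDist u v) {i j k : β}
    (hij : i ≠ j) (hik : i ≠ k) (hjk : j ≠ k) :
    Set.InjOn (fun x : Σ _ : ι → β, ι × ι => update (update x.1 x.2.1 i) x.2.2 i)
      (C.sigma fun c => ({p | c p = j} : Finset ι) ×ˢ ({q | c q = k} : Finset ι)) := by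
  rintro ⟨c, p, q⟩ hx ⟨c', p', q'⟩ hx' heq
  simp only [coe_sigma, Set.mem_sigma_iff, mem_coe, mem_product, mem_filter, mem_univ,
    true_and] at hx hx' heq
  obtain ⟨hc, hp, hq⟩ := hx
  obtain ⟨hc', hp', hq'⟩ := hx'
  obtain rfl : c = c' := by
    by_contra hne
    have hfar := hC c hc c' hc' hne
    have hc_near := hammingDist_update_update_le c p q i i
    have hc'_near := hammingDist_update_update_le c' p' q' i i
    rw [heq] at hc_near
    rw [hammingDist_comm] at hc'_near
    have := hammingDist_triangle c (update (update c' p' i) q' i) c'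
    omega
  have hchanged : ∀ x, c x ≠ i → x = p' ∨ x = q' → x = p ∨ x = q := fun x hx hx' => by
    have := (update_update_eq_self_iff c p' q' i x).2 (by tauto)
    rw [← heq, update_update_eq_self_iff] at this
    tauto
  obtain rfl : p' = p := (hchanged p' (hp' ▸ hij.symm) (Or.inl rfl)).resolve_right
    fun h => hjk (hp'.symm.trans (h ▸ hq))
  obtain rfl : q' = q := (hchanged q' (hq' ▸ hik.symm) (Or.inr rfl)).resolve_left
    fun h => hjk (hp.symm.trans (h ▸ hq'))
  rfl

lemma card_mul_le_multinomial_of_dist [Fintype β] {C : Finset (ι → β)} {ω : β → ℕ}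
    (hcomp : ∀ c ∈ C, ∀ a, #{x | c x = a} = ω a)
    (hC : ∀ u ∈ C, ∀ v ∈ C, u ≠ v → 5 ≤ hammingDist u v) {i j k : β}
    (hij : i ≠ j) (hik : i ≠ k) (hjk : j ≠ k) :
    #C * (ω j * ω k) ≤
      Nat.multinomial univ (ω - Pi.single j 1 + Pi.single i 1 - Pi.single k 1 + Pi.single i 1) := by
  set S := C.sigma fun c => ({p | c p = j} : Finset ι) ×ˢ ({q | c q = k} : Finset ι)
  have hS : #S = #C * (ω j * ω k) := by
    rw [card_sigma, sum_congr rfl fun c hc => by rw [card_product, hcomp c hc, hcomp c hc],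
      sum_const, smul_eq_mul]
  rw [← hS, ← card_image_of_injOn (injOn_update_update hC hij hik hjk)]
  refine card_le_multinomial_of_card_fiber_eq _ _ fun w hw => ?_
  obtain ⟨⟨c, p, q⟩, hx, rfl⟩ := mem_image.1 hw
  simp only [mem_sigma, mem_product, mem_filter, mem_univ, true_and] at hx
  exact card_filter_update_update_eq (hcomp c hx.1) hx.2.1 hx.2.2 hij hik hjk

end TwoLetterChanges

theorem stmt_11_general (n : ℕ) (ω : Fin 3 → ℕ)
    (i : Fin 3) (hother : ∀ j : Fin 3, j ≠ i → 1 ≤ ω j)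
    (C : Finset (Fin n → Fin 3))
    (hcomp : ∀ c ∈ C, ∀ a : Fin 3, (Finset.univ.filter (fun k => c k = a)).card = ω a)
    (hdist : ∀ u ∈ C, ∀ v ∈ C, u ≠ v → 5 ≤ hammingDist u v) :
    C.card * ((ω i + 2) * (ω i + 1)) ≤ Nat.multinomial Finset.univ ω := by
  obtain ⟨j, k, hij, hik, hjk⟩ : ∃ j k : Fin 3, i ≠ j ∧ i ≠ k ∧ j ≠ k := by
    fin_cases i <;> decide
  have hj : 0 < ω j := hother j hij.symm
  have hk : 0 < ω k := hother k hik.symm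
  set ω₁ : Fin 3 → ℕ := ω - Pi.single j 1 + Pi.single i 1
  have hω₁i : ω₁ i = ω i + 1 := by simp [ω₁, hij]
  have hω₁k : ω₁ k = ω k := by simp [ω₁, hjk.symm, hik.symm]
  have hcount := card_mul_le_multinomial_of_dist hcomp hdist hij hik hjk
  have hmult₁ := Nat.multinomial_sub_single_add_single_mul hij hj
  have hmult₂ := Nat.multinomial_sub_single_add_single_mul hik (hω₁k ▸ hk)
  rw [hω₁i, hω₁k] at hmult₂
  refine Nat.le_of_mul_le_mul_right ?_ (Nat.mul_pos hj hk)
  calc #C * ((ω i + 2) * (ω i + 1)) * (ω j * ω k)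
      = #C * (ω j * ω k) * ((ω i + 1 + 1) * (ω i + 1)) := by ring
    _ ≤ Nat.multinomial univ (ω₁ - Pi.single k 1 + Pi.single i 1) * ((ω i + 1 + 1) * (ω i + 1)) :=
        Nat.mul_le_mul_right _ hcount
    _ = Nat.multinomial univ ω * (ω j * ω k) := by
        rw [← mul_assoc, hmult₂, mul_right_comm, hmult₁, mul_assoc]

/-- Let `[ω₀, ω₁, ω₂]` be a composition of `n` and let `i ∈ {0,1,2}` be
an index such that the other two indices `j` satisfy `ω j ≥ 1`. Then every ternary
constant-composition code `C` of length `n` with composition `ω` and minimum distance at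
least `5` satisfies `|C| · (ωᵢ + 2)(ωᵢ + 1) ≤ n!/(ω₀!ω₁!ω₂!)`. -/
theorem stmt_11 (n : ℕ) (ω : Fin 3 → ℕ) (hω : ∑ a, ω a = n)
    (i : Fin 3) (hother : ∀ j : Fin 3, j ≠ i → 1 ≤ ω j)
    (C : Finset (Fin n → Fin 3))
    (hcomp : ∀ c ∈ C, ∀ a : Fin 3, (Finset.univ.filter (fun k => c k = a)).card = ω a)
    (hdist : ∀ u ∈ C, ∀ v ∈ C, u ≠ v → 5 ≤ hammingDist u v) :
    C.card * ((ω i + 2) * (ω i + 1)) ≤ Nat.multinomial Finset.univ ω :=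
  stmt_11_general n ω i hother C hcomp hdist
end
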